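/- arXiv:1210.5475 — 2 statements merged into one kernel-verified Lean document; each statement's English description precedes it below -/
import Mathlib

section
/- Every nonzero finite dimensional representation M of a finite quiver has a unique subrepresentation M₁ of maximal slope μ(M₁) = Θ(M₁)/σ(M₁) among all nonzero subrepresentations of M, and of maximal total dimension σ(M₁) among those of maximal slope. Moreover M₁ is (Θ,σ)-semistable and every nonzero subrepresentation N ⊆ M with μ(N) = μ(M₁) satisfies N ⊆ M₁. -/
open Finset

/-- A subrepresentation of a fixed representation `M` of a quiver with vertex set `V`,
arrow set `E`, source/target maps `src tgt : E → V` and structure maps `f`. -/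
structure Subrep {k V E : Type} [Field k] (M : V → Type) [∀ v, AddCommGroup (M v)]
    [∀ v, Module k (M v)] (src tgt : E → V) (f : ∀ e, M (src e) →ₗ[k] M (tgt e)) : Type where
  N : ∀ v, Submodule k (M v)
  compat : ∀ e, (N (src e)).map (f e) ≤ N (tgt e)

namespace Subrep

variable {k V E : Type} [Field k] [Fintype V] {M : V → Type}
  [∀ v, AddCommGroup (M v)] [∀ v, Module k (M v)] [∀ v, FiniteDimensional k (M v)]
  {src tgt : E → V} {f : ∀ e, M (src e) →ₗ[k] M (tgt e)}

instance : PartialOrder (Subrep M src tgt f) :=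
  PartialOrder.lift Subrep.N (fun A B h => by cases A; cases B; simpa using h)

/-- The zero subrepresentation. -/
def bot : Subrep M src tgt f := ⟨fun _ => ⊥, fun e => by simp⟩

/-- The whole representation `M` as a subrepresentation of itself. -/
def top : Subrep M src tgt f := ⟨fun _ => ⊤, fun e => le_top⟩

/-- Sum of two subrepresentations. -/
def sup (A B : Subrep M src tgt f) : Subrep M src tgt f :=
  ⟨fun v => A.N v ⊔ B.N v, fun e => by
    rw [Submodule.map_sup]
    exact sup_le_sup (A.compat e) (B.compat e)⟩

/-- `tot c A = ∑_v c_v · dim A_v`; gives `Θ(A)` resp. `σ(A)` for `c = Θ` resp. `σ`. -/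
noncomputable def tot (c : V → ℤ) (A : Subrep M src tgt f) : ℤ :=
  ∑ v, c v * (Module.finrank k (A.N v) : ℤ)

/-- The slope `μ(A) = Θ(A)/σ(A)` as a rational number. -/
noncomputable def slope (Θ σ : V → ℤ) (A : Subrep M src tgt f) : ℚ :=
  (tot Θ A : ℚ) / (tot σ A : ℚ)

/-- The slope of the quotient `B/A` for `A ≤ B`. -/
noncomputable def quotSlope (Θ σ : V → ℤ) (A B : Subrep M src tgt f) : ℚ :=
  ((tot Θ B - tot Θ A : ℤ) : ℚ) / ((tot σ B - tot σ A : ℤ) : ℚ)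

/-- `(Θ,σ)`-semistability of the subrepresentation `A`, viewed as a representation itself:
every nonzero proper subrepresentation of `A` has slope at most `μ(A)`. -/
def Semistable (Θ σ : V → ℤ) (A : Subrep M src tgt f) : Prop :=
  ∀ B : Subrep M src tgt f, B ≤ A → B ≠ bot → B ≠ A → slope Θ σ B ≤ slope Θ σ A

/-- `(Θ,σ)`-semistability of the quotient representation `B/A`, expressed via the
correspondence between subrepresentations of `B/A` and subrepresentations `P` with
`A ≤ P ≤ B`. -/
def QuotSemistable (Θ σ : V → ℤ) (A B : Subrep M src tgt f) : Prop :=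
  ∀ P : Subrep M src tgt f, A ≤ P → P ≤ B → P ≠ A → quotSlope Θ σ A P ≤ quotSlope Θ σ A B

/-- `F` (indexed by `ℕ`, constant equal to `⊤` from `n+1` on) is a Harder–Narasimhan
filtration `0 = F 0 ⊂ F 1 ⊂ ⋯ ⊂ F (n+1) = M` : successive quotients have strictly
decreasing slopes and are `(Θ,σ)`-semistable. -/
def IsHNFiltration (Θ σ : V → ℤ) (n : ℕ) (F : ℕ → Subrep M src tgt f) : Prop :=
  F 0 = bot ∧ (∀ i, n + 1 ≤ i → F i = top) ∧
  (∀ i ≤ n, F i < F (i+1)) ∧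
  (∀ i, i + 1 ≤ n → quotSlope Θ σ (F (i+1)) (F (i+2)) < quotSlope Θ σ (F i) (F (i+1))) ∧
  (∀ i ≤ n, QuotSemistable Θ σ (F i) (F (i+1)))

end Subrep

/-!
Let `μ` be the largest slope of a nonzero subrepresentation; it exists because slopes only
depend on dimension vectors, of which there are finitely many. The defect
`Θ(A) - μ σ(A)` is nonpositive, vanishes exactly on the subrepresentations of slope `μ`,
and is modular, because dimensions are: `d(A + B) + d(A ∩ B) = d(A) + d(B)`. Hence the
subrepresentations of slope `μ` are closed under sums, and the one of largest `σ` among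
them contains all the others.
-/

lemma exists_forall_le_of_finite_range {α β : Type*} [LinearOrder β] {f : α → β}
    (hf : (Set.range f).Finite) {s : Set α} (hs : s.Nonempty) :
    ∃ a ∈ s, ∀ b ∈ s, f b ≤ f a := by
  obtain ⟨_, ⟨a, ha, rfl⟩, hmax⟩ :=
    Set.exists_max_image (f '' s) id (hf.subset (Set.image_subset_range f s)) (hs.image f)
  exact ⟨a, ha, fun b hb => hmax _ ⟨b, hb, rfl⟩⟩

namespace Subrep

variable {k V E : Type} [Field k] {M : V → Type} [∀ v, AddCommGroup (M v)] [∀ v, Module k (M v)]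
  {src tgt : E → V} {f : ∀ e, M (src e) →ₗ[k] M (tgt e)}

def inf (A B : Subrep M src tgt f) : Subrep M src tgt f :=
  ⟨fun v => A.N v ⊓ B.N v, fun e => le_inf
    ((Submodule.map_mono inf_le_left).trans (A.compat e))
    ((Submodule.map_mono inf_le_right).trans (B.compat e))⟩

lemma N_injective : Function.Injective (N : Subrep M src tgt f → ∀ v, Submodule k (M v)) :=
  fun A B h => by cases A; cases B; simpa using h

lemma eq_bot_iff {A : Subrep M src tgt f} : A = bot ↔ ∀ v, A.N v = ⊥ :=
  ⟨by rintro rfl v; rfl, fun h => N_injective (funext h)⟩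

lemma le_sup_left (A B : Subrep M src tgt f) : A ≤ A.sup B := fun _ => _root_.le_sup_left

lemma le_sup_right (A B : Subrep M src tgt f) : B ≤ A.sup B := fun _ => _root_.le_sup_right

lemma sup_ne_bot {A : Subrep M src tgt f} (hA : A ≠ bot) (B : Subrep M src tgt f) :
    A.sup B ≠ bot := by
  rw [Ne, eq_bot_iff] at hA ⊢
  exact fun h => hA fun v => le_bot_iff.1 (h v ▸ le_sup_left A B v)

noncomputable def dimVec (A : Subrep M src tgt f) : V → ℕ := fun v => Module.finrank k (A.N v)

variable [Fintype V]

lemma tot_bot (c : V → ℤ) : tot c (bot : Subrep M src tgt f) = 0 := by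
  change ∑ v, c v * (Module.finrank k (⊥ : Submodule k (M v)) : ℤ) = 0
  simp

variable [∀ v, FiniteDimensional k (M v)]

lemma tot_sup_add_tot_inf (c : V → ℤ) (A B : Subrep M src tgt f) :
    tot c (A.sup B) + tot c (A.inf B) = tot c A + tot c B := by
  simp only [tot, sup, inf, ← Finset.sum_add_distrib, ← mul_add]
  refine Finset.sum_congr rfl fun v _ => ?_
  exact congrArg (c v * ·)
    (by exact_mod_cast Submodule.finrank_sup_add_finrank_inf_eq (A.N v) (B.N v))

lemma tot_mono {c : V → ℤ} (hc : ∀ v, 0 ≤ c v) {A B : Subrep M src tgt f} (h : A ≤ B) :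
    tot c A ≤ tot c B :=
  Finset.sum_le_sum fun v _ =>
    mul_le_mul_of_nonneg_left (by exact_mod_cast Submodule.finrank_mono (h v)) (hc v)

lemma tot_pos {c : V → ℤ} (hc : ∀ v, 0 < c v) {A : Subrep M src tgt f} (hA : A ≠ bot) :
    0 < tot c A := by
  obtain ⟨v, hv⟩ : ∃ v, A.N v ≠ ⊥ := by simpa [eq_bot_iff] using hA
  have hrank : 0 < Module.finrank k (A.N v) :=
    Module.finrank_pos_iff.2 (Submodule.nontrivial_iff_ne_bot.2 hv)
  refine Finset.sum_pos' (fun w _ => mul_nonneg (hc w).le (by positivity)) ⟨v, mem_univ v, ?_⟩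
  exact mul_pos (hc v) (by exact_mod_cast hrank)

lemma eq_of_le_of_tot_le {c : V → ℤ} (hc : ∀ v, 0 < c v) {A B : Subrep M src tgt f}
    (h : A ≤ B) (ht : tot c B ≤ tot c A) : A = B := by
  refine N_injective (funext fun v => Submodule.eq_of_le_of_finrank_le (h v) ?_)
  by_contra! hlt
  have : tot c A < tot c B :=
    Finset.sum_lt_sum (fun w _ => mul_le_mul_of_nonneg_left
      (by exact_mod_cast Submodule.finrank_mono (h w)) (hc w).le)
      ⟨v, mem_univ v, mul_lt_mul_of_pos_left (by exact_mod_cast hlt) (hc v)⟩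
  omega

lemma finite_range_dimVec : (Set.range (dimVec : Subrep M src tgt f → V → ℕ)).Finite := by
  refine (Set.Finite.pi fun v => Set.finite_Iic (Module.finrank k (M v))).subset ?_
  rintro _ ⟨A, rfl⟩ v -
  exact Submodule.finrank_le (A.N v)

lemma finite_range_tot (c : V → ℤ) : (Set.range (tot c : Subrep M src tgt f → ℤ)).Finite := by
  change (Set.range ((fun d : V → ℕ => ∑ v, c v * (d v : ℤ)) ∘ dimVec)).Finite
  rw [Set.range_comp]
  exact finite_range_dimVec.image _

lemma finite_range_slope (Θ σ : V → ℤ) :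
    (Set.range (slope Θ σ : Subrep M src tgt f → ℚ)).Finite := by
  change (Set.range ((fun d : V → ℕ => ((∑ v, Θ v * (d v : ℤ) : ℤ) : ℚ) /
    ((∑ v, σ v * (d v : ℤ) : ℤ) : ℚ)) ∘ dimVec)).Finite
  rw [Set.range_comp]
  exact finite_range_dimVec.image _

lemma exists_forall_slope_le (hM : (top : Subrep M src tgt f) ≠ bot) :
    ∃ M₁ : Subrep M src tgt f, M₁ ≠ bot ∧
      ∀ N : Subrep M src tgt f, N ≠ bot → slope Θ σ N ≤ slope Θ σ M₁ :=
  exists_forall_le_of_finite_range (finite_range_slope Θ σ) ⟨top, hM⟩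

section MaximalSlope

variable {Θ σ : V → ℤ} (hσ : ∀ v, 0 < σ v) {μ : ℚ}
include hσ

lemma slope_le_iff {A : Subrep M src tgt f} (hA : A ≠ bot) :
    slope Θ σ A ≤ μ ↔ (tot Θ A : ℚ) ≤ μ * tot σ A :=
  div_le_iff₀ (by exact_mod_cast tot_pos hσ hA)

lemma slope_eq_iff {A : Subrep M src tgt f} (hA : A ≠ bot) :
    slope Θ σ A = μ ↔ (tot Θ A : ℚ) = μ * tot σ A :=
  div_eq_iff (by exact_mod_cast (tot_pos hσ hA).ne')

lemma tot_le_of_forall_slope_le (hμ : ∀ N : Subrep M src tgt f, N ≠ bot → slope Θ σ N ≤ μ)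
    (A : Subrep M src tgt f) : (tot Θ A : ℚ) ≤ μ * tot σ A := by
  by_cases hA : A = bot
  · simp [hA, tot_bot]
  · exact (slope_le_iff hσ hA).1 (hμ A hA)

lemma slope_sup_eq (hμ : ∀ N : Subrep M src tgt f, N ≠ bot → slope Θ σ N ≤ μ)
    {A B : Subrep M src tgt f} (hA : A ≠ bot) (hB : B ≠ bot)
    (hAμ : slope Θ σ A = μ) (hBμ : slope Θ σ B = μ) : slope Θ σ (A.sup B) = μ := by
  have hAB := sup_ne_bot hA B
  refine le_antisymm (hμ _ hAB) ?_
  rw [slope_eq_iff hσ hA] at hAμ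
  rw [slope_eq_iff hσ hB] at hBμ
  rw [slope, le_div_iff₀ (by exact_mod_cast tot_pos hσ hAB)]
  have hΘ : (tot Θ (A.sup B) + tot Θ (A.inf B) : ℚ) = tot Θ A + tot Θ B := by
    exact_mod_cast tot_sup_add_tot_inf Θ A B
  have hσ' : (tot σ (A.sup B) + tot σ (A.inf B) : ℚ) = tot σ A + tot σ B := by
    exact_mod_cast tot_sup_add_tot_inf σ A B
  have hinf := tot_le_of_forall_slope_le hσ hμ (A.inf B)
  linear_combination -hΘ + μ * hσ' - hAμ - hBμ + hinf

lemma exists_greatest_of_slope_eq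
    (hμ : ∀ N : Subrep M src tgt f, N ≠ bot → slope Θ σ N ≤ μ)
    {A : Subrep M src tgt f} (hA : A ≠ bot) (hAμ : slope Θ σ A = μ) :
    ∃ M₁ : Subrep M src tgt f, M₁ ≠ bot ∧ slope Θ σ M₁ = μ ∧
      ∀ N : Subrep M src tgt f, N ≠ bot → slope Θ σ N = μ → N ≤ M₁ := by
  obtain ⟨M₁, ⟨hM₁, hM₁μ⟩, hmax⟩ :=
    exists_forall_le_of_finite_range (finite_range_tot σ)
      (s := {N : Subrep M src tgt f | N ≠ bot ∧ slope Θ σ N = μ}) ⟨A, hA, hAμ⟩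
  refine ⟨M₁, hM₁, hM₁μ, fun N hN hNμ => ?_⟩
  have hsup : M₁ = N.sup M₁ := eq_of_le_of_tot_le hσ (le_sup_right N M₁)
    (hmax _ ⟨sup_ne_bot hN M₁, slope_sup_eq hσ hμ hN hM₁ hNμ hM₁μ⟩)
  exact hsup ▸ le_sup_left N M₁

end MaximalSlope

end Subrep

open Subrep in
/-- Every nonzero representation `M` has a unique nonzero subrepresentation `M₁` of
maximal slope and, among those, of maximal total dimension `σ(M₁)`; moreover `M₁` is
`(Θ,σ)`-semistable and contains every nonzero subrepresentation of the same slope. -/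
theorem maximal_destabilizing {k V E : Type} [Field k] [Fintype V] {M : V → Type}
    [∀ v, AddCommGroup (M v)] [∀ v, Module k (M v)] [∀ v, FiniteDimensional k (M v)]
    {src tgt : E → V} {f : ∀ e, M (src e) →ₗ[k] M (tgt e)}
    (Θ σ : V → ℤ) (hσ : ∀ v, 0 < σ v)
    (hM : (top : Subrep M src tgt f) ≠ bot) :
    ∃! M₁ : Subrep M src tgt f, M₁ ≠ bot ∧
      (∀ N : Subrep M src tgt f, N ≠ bot → slope Θ σ N ≤ slope Θ σ M₁) ∧
      (∀ N : Subrep M src tgt f, N ≠ bot → slope Θ σ N = slope Θ σ M₁ →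
        tot σ N ≤ tot σ M₁) ∧
      Semistable Θ σ M₁ ∧
      (∀ N : Subrep M src tgt f, N ≠ bot → slope Θ σ N = slope Θ σ M₁ → N ≤ M₁) := by
  obtain ⟨A, hA, hAmax⟩ := exists_forall_slope_le (Θ := Θ) (σ := σ) hM
  obtain ⟨M₁, hM₁, hM₁μ, hle⟩ := exists_greatest_of_slope_eq hσ hAmax hA rfl
  have hmax : ∀ N, N ≠ bot → slope Θ σ N ≤ slope Θ σ M₁ := hM₁μ ▸ hAmax
  have hle' : ∀ N, N ≠ bot → slope Θ σ N = slope Θ σ M₁ → N ≤ M₁ := hM₁μ ▸ hle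
  refine ⟨M₁, ⟨hM₁, hmax, fun N hN hNμ => tot_mono (fun v => (hσ v).le) (hle' N hN hNμ),
    fun B _ hB _ => hmax B hB, hle'⟩, ?_⟩
  rintro M₂ ⟨hM₂, hM₂max, -, -, hM₂le⟩
  have hμ : slope Θ σ M₂ = slope Θ σ M₁ := le_antisymm (hmax M₂ hM₂) (hM₂max M₁ hM₁)
  exact le_antisymm (hle' M₂ hM₂ hμ) (hM₂le M₁ hM₁ hμ.symm)
end

section
/- Let b^1,...,b^{t+1} be positive reals defining the inner product (x,y) = Σ b^i x_i y_i on ℝ^{t+1}, and let v ∈ ℝ^{t+1} satisfy Σ b^i v_i = 0. Define w^i = −b^i v_i, partial sums w_i = w^1 + ... + w^i and b_i = b^1 + ... + b^i, let (b_i, w̃_i) be the convex envelope from above (the concave majorant) of the points (b_i, w_i) with (b_0,w_0)=(0,0), and set Γ_i = −(w̃_i − w̃_{i−1})/b^i. Then, assuming there exists Γ ∈ C̄ with μ_v(Γ) > 0, the vector Γ_v = (Γ_1,...,Γ_{t+1}) maximizes the function μ_v(Γ) = (Γ, v)/‖Γ‖ over the closed cone C̄ = {Γ ∈ ℝ^{t+1}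 : Γ_1 ≤ Γ_2 ≤ ... ≤ Γ_{t+1}}. -/
open Finset

/-- The Kempf-type function `μ_v(Γ) = (Γ,v)/‖Γ‖` for the inner product with diagonal
coefficients `b i`, on vectors indexed by `0,…,n-1`. -/
noncomputable def kempfMu (n : ℕ) (b v Γ : ℕ → ℝ) : ℝ :=
  (∑ i ∈ range n, b i * Γ i * v i) / Real.sqrt (∑ i ∈ range n, b i * Γ i ^ 2)

/-- Abel summation for partial-sum functions with `F 0 = 0`. -/
private lemma abel_sum (t : ℕ) (g F : ℕ → ℝ) (hF0 : F 0 = 0) :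
    ∑ i ∈ range (t + 1), g i * (F (i + 1) - F i)
      = g t * F (t + 1) - ∑ i ∈ range t, (g (i + 1) - g i) * F (i + 1) := by
  induction t with
  | zero => simp [hF0]
  | succ n ih =>
    rw [sum_range_succ, ih, sum_range_succ]; ring

/-- Weighted Cauchy–Schwarz. -/
private lemma weighted_cs (s : Finset ℕ) (b f h : ℕ → ℝ) (hb : ∀ i, 0 < b i) :
    ∑ i ∈ s, b i * f i * h i
      ≤ Real.sqrt (∑ i ∈ s, b i * f i ^ 2) * Real.sqrt (∑ i ∈ s, b i * h i ^ 2) := by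
  have h1 : ∀ i ∈ s, b i * f i * h i
      = (Real.sqrt (b i) * f i) * (Real.sqrt (b i) * h i) := by
    intro i _
    have : Real.sqrt (b i) * Real.sqrt (b i) = b i := Real.mul_self_sqrt (hb i).le
    linear_combination (-(f i * h i)) * this
  have h2 : ∀ i ∈ s, b i * f i ^ 2 = (Real.sqrt (b i) * f i) ^ 2 := by
    intro i _
    have : Real.sqrt (b i) * Real.sqrt (b i) = b i := Real.mul_self_sqrt (hb i).le
    linear_combination (-(f i ^ 2)) * this
  have h3 : ∀ i ∈ s, b i * h i ^ 2 = (Real.sqrt (b i) * h i) ^ 2 := by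
    intro i _
    have : Real.sqrt (b i) * Real.sqrt (b i) = b i := Real.mul_self_sqrt (hb i).le
    linear_combination (-(h i ^ 2)) * this
  rw [sum_congr rfl h1, sum_congr rfl h2, sum_congr rfl h3]
  exact Real.sum_mul_le_sqrt_mul_sqrt s _ _

/-- (Gómez–Sols–Zamora) The vector `Γ` of negated slopes of the convex envelope (least
concave majorant) `Wt` of the graph `(b_1+⋯+b_i, w_1+⋯+w_i)`, `w_i = −b_i v_i`,
maximizes `μ_v(Γ) = (Γ,v)/‖Γ‖` on the cone `Γ_1 ≤ ⋯ ≤ Γ_{t+1}`, provided some vector of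
the cone gives a positive value. The envelope is characterized by: it majorizes the
graph, is concave (slopes `−Γ_i` nonincreasing), agrees with the graph at both endpoints
and at every index where the slope changes. -/
theorem kempf_max_convex_envelope (t : ℕ) (b v : ℕ → ℝ) (hb : ∀ i, 0 < b i)
    (hv : ∑ i ∈ range (t + 1), b i * v i = 0)
    (W : ℕ → ℝ) (hW : ∀ j, W j = ∑ i ∈ range j, -(b i * v i))
    (Wt : ℕ → ℝ) (hmaj : ∀ j ≤ t + 1, W j ≤ Wt j)
    (h0 : Wt 0 = 0) (hlast : Wt (t + 1) = W (t + 1))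
    (Γ : ℕ → ℝ) (hΓ : ∀ i ≤ t, Γ i = -(Wt (i + 1) - Wt i) / b i)
    (hconc : ∀ i, i + 1 ≤ t → Γ i ≤ Γ (i + 1))
    (htouch : ∀ i, i + 1 ≤ t → Γ i < Γ (i + 1) → Wt (i + 1) = W (i + 1))
    (hexists : ∃ g : ℕ → ℝ, (∀ i, i + 1 ≤ t → g i ≤ g (i + 1)) ∧
      0 < kempfMu (t + 1) b v g) :
    ∀ g : ℕ → ℝ, (∀ i, i + 1 ≤ t → g i ≤ g (i + 1)) →
      kempfMu (t + 1) b v g ≤ kempfMu (t + 1) b v Γ := by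
  have hW0 : W 0 = 0 := by simp [hW]
  have hWstep : ∀ i, W (i + 1) - W i = -(b i * v i) := by
    intro i; rw [hW, hW, sum_range_succ]; ring
  have hΓstep : ∀ i ≤ t, Wt (i + 1) - Wt i = -(b i * Γ i) := by
    intro i hi
    have hbne : b i ≠ 0 := (hb i).ne'
    rw [hΓ i hi]
    field_simp
  -- the numerator functional
  set A : (ℕ → ℝ) → ℝ := fun f => ∑ i ∈ range (t + 1), b i * f i * v i with hA
  have key1 : ∀ f : ℕ → ℝ,
      A f = -(f t * W (t + 1)) + ∑ i ∈ range t, (f (i + 1) - f i) * W (i + 1) := by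
    intro f
    have h1 : A f = -∑ i ∈ range (t + 1), f i * (W (i + 1) - W i) := by
      rw [hA, ← Finset.sum_neg_distrib]
      refine sum_congr rfl fun i _ => ?_
      rw [hWstep i]; ring
    rw [h1, abel_sum t f W hW0]; ring
  have key2 : ∀ f : ℕ → ℝ,
      (∑ i ∈ range (t + 1), b i * f i * Γ i)
        = -(f t * Wt (t + 1)) + ∑ i ∈ range t, (f (i + 1) - f i) * Wt (i + 1) := by
    intro f
    have h1 : (∑ i ∈ range (t + 1), b i * f i * Γ i)
        = -∑ i ∈ range (t + 1), f i * (Wt (i + 1) - Wt i) := by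
      rw [← Finset.sum_neg_distrib]
      refine sum_congr rfl fun i hi => ?_
      rw [hΓstep i (Nat.lt_succ_iff.mp (mem_range.mp hi))]; ring
    rw [h1, abel_sum t f Wt h0]; ring
  -- A f ≤ ⟨f, Γ⟩ for monotone f
  have hdom : ∀ f : ℕ → ℝ, (∀ i, i + 1 ≤ t → f i ≤ f (i + 1)) →
      A f ≤ ∑ i ∈ range (t + 1), b i * f i * Γ i := by
    intro f hf
    rw [key1 f, key2 f, hlast]
    refine add_le_add le_rfl (sum_le_sum fun i hi => ?_)
    have hi' : i + 1 ≤ t := mem_range.mp hi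
    exact mul_le_mul_of_nonneg_left (hmaj (i + 1) (by omega))
      (sub_nonneg.mpr (hf i hi'))
  -- equality for f = Γ
  have heq : A Γ = ∑ i ∈ range (t + 1), b i * Γ i * Γ i := by
    rw [key1 Γ, key2 Γ, hlast]
    refine congrArg _ (sum_congr rfl fun i hi => ?_)
    have hi' : i + 1 ≤ t := mem_range.mp hi
    rcases (hconc i hi').lt_or_eq with hlt | heq'
    · rw [htouch i hi' hlt]
    · rw [← heq']; ring
  have hS : (∑ i ∈ range (t + 1), b i * Γ i * Γ i)
      = ∑ i ∈ range (t + 1), b i * Γ i ^ 2 :=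
    sum_congr rfl fun i _ => by ring
  set S : ℝ := ∑ i ∈ range (t + 1), b i * Γ i ^ 2 with hSdef
  have hSnn : 0 ≤ S := sum_nonneg fun i _ => mul_nonneg (hb i).le (sq_nonneg _)
  -- positivity of S from hexists
  have hSpos : 0 < S := by
    obtain ⟨g0, hg0m, hg0⟩ := hexists
    have hAg0 : 0 < A g0 := by
      by_contra hle
      push_neg at hle
      have : kempfMu (t + 1) b v g0 ≤ 0 :=
        div_nonpos_of_nonpos_of_nonneg hle (Real.sqrt_nonneg _)
      linarith
    have hcs := weighted_cs (range (t + 1)) b g0 Γ hb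
    have hchain := le_trans (hdom g0 hg0m) hcs
    by_contra hS0
    push_neg at hS0
    have hS0' : S = 0 := le_antisymm hS0 hSnn
    rw [← hSdef, hS0'] at hchain
    simp at hchain
    linarith
  have hsqrtS : 0 < Real.sqrt S := Real.sqrt_pos.mpr hSpos
  -- the RHS equals √S
  have hRHS : kempfMu (t + 1) b v Γ = Real.sqrt S := by
    unfold kempfMu
    rw [show (∑ i ∈ range (t + 1), b i * Γ i * v i) = S from heq.trans hS]
    exact Real.div_sqrt
  intro g hg
  rw [hRHS]
  unfold kempfMu
  set X : ℝ := ∑ i ∈ range (t + 1), b i * g i ^ 2 with hXdef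
  have hXnn : 0 ≤ X := sum_nonneg fun i _ => mul_nonneg (hb i).le (sq_nonneg _)
  rcases le_or_gt (A g) 0 with hAg | hAg
  · exact le_trans (div_nonpos_of_nonpos_of_nonneg hAg (Real.sqrt_nonneg _)) hsqrtS.le
  · have hcs := weighted_cs (range (t + 1)) b g Γ hb
    have hchain : A g ≤ Real.sqrt X * Real.sqrt S := le_trans (hdom g hg) hcs
    have hXpos : 0 < Real.sqrt X := by
      rcases (Real.sqrt_nonneg X).lt_or_eq with h | h
      · exact h
      · exfalso; rw [← h] at hchain; simp at hchain; linarith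
    rw [div_le_iff₀ hXpos]
    linarith [hchain]
end
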